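/- arXiv:2511.06314 — 2 statements merged into one kernel-verified Lean document; each statement's English description precedes it below -/
import Mathlib

section
/- Let M be a nonempty type, i : M → M → ℝ a nonnegative function, A : M → ℝ a nonnegative function, and for each t ∈ ℝ let E t : M → ℝ be positive. Fix F ∈ M, and assume: (1) for all t and all F', E t F * E t F' ≥ (i F F')^2; (2) for all t and all F', Real.exp (-2*t) * E t F' ≥ A F'; (3) for all F', the function t ↦ Real.exp (-2*t) * E t F' tends to A F' as t → ∞; (4) for every t there exists H ∈ M with E t F * E t H = (i F H)^2. Then, with S := ⨆ F', ((i F F')^2 / A F' : ℝ≥0∞) (where division by zero in ℝ≥0∞ of a positive number is ∞), the function t ↦ ((Real.exp (2*t) * E t F : ℝ≥0) : ℝ≥0∞) tends to S as t → ∞. -/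
/-!
Put `f t = e^{2t} E_t(F)` and `g_{F'} t = e^{-2t} E_t(F')`, so that `f t * g_{F'} t = E_t(F) E_t(F')`.
The Minsky inequality gives `i(F,F')² / g_{F'} t ≤ f t` for every `F'`, with equality at the
`F' = H` of the equality case. Walsh's inequality `A ≤ g_{F'}` turns the equality case into the
uniform upper bound `f t ≤ sup_{F'} i(F,F')² / A(F')`, while letting `t → ∞` in the Minsky
inequality shows that every term `i(F,F')² / A(F')` of the supremum is a lower bound for
`liminf f`.
-/

open Filter Topology

theorem tendsto_iSup_of_le_iSup_of_tendsto_le {α ι β : Type*} [CompleteLinearOrder β]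
    [TopologicalSpace β] [OrderTopology β] {l : Filter α} [l.NeBot] {f : α → β} {s : ι → β}
    (u : ι → α → β) (hf : ∀ᶠ x in l, f x ≤ ⨆ j, s j) (hu : ∀ j, Tendsto (u j) l (𝓝 (s j)))
    (hle : ∀ j, ∀ᶠ x in l, u j x ≤ f x) :
    Tendsto f l (𝓝 (⨆ j, s j)) := by
  have hliminf : ⨆ j, s j ≤ l.liminf f :=
    iSup_le fun j => (hu j).liminf_eq ▸ liminf_le_liminf (hle j)
  exact tendsto_of_le_liminf_of_limsup_le hliminf (limsup_le_of_le (by isBoundedDefault) hf)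

namespace ENNReal

theorem ofReal_div_ofReal_le_ofReal {c x y : ℝ} (hy : 0 < y) (h : c ≤ x * y) :
    ENNReal.ofReal c / ENNReal.ofReal y ≤ ENNReal.ofReal x := by
  rw [← ofReal_div_of_pos hy]
  exact ofReal_le_ofReal ((div_le_iff₀ hy).2 h)

theorem ofReal_eq_ofReal_div_ofReal {c x y : ℝ} (hy : 0 < y) (h : x * y = c) :
    ENNReal.ofReal x = ENNReal.ofReal c / ENNReal.ofReal y := by
  rw [← ofReal_div_of_pos hy, ← h, mul_div_cancel_right₀ _ hy.ne']

end ENNReal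

theorem exp_two_mul_mul_exp_neg_two_mul (t x y : ℝ) :
    Real.exp (2 * t) * x * (Real.exp (-2 * t) * y) = x * y := by
  rw [mul_mul_mul_comm, ← Real.exp_add]
  simp

theorem stmt_5_general {M : Type*} (i : M → M → ℝ)
    (A : M → ℝ)
    (E : ℝ → M → ℝ) (hE : ∀ t F', 0 < E t F')
    (F : M)
    (h1 : ∀ t F', E t F * E t F' ≥ (i F F') ^ 2)
    (h2 : ∀ t F', Real.exp (-2 * t) * E t F' ≥ A F')
    (h3 : ∀ F', Tendsto (fun t => Real.exp (-2 * t) * E t F') atTop (nhds (A F')))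
    (h4 : ∀ t, ∃ H, E t F * E t H = (i F H) ^ 2) :
    Tendsto (fun t => ENNReal.ofReal (Real.exp (2 * t) * E t F)) atTop
      (nhds (⨆ F', ENNReal.ofReal ((i F F') ^ 2) / ENNReal.ofReal (A F'))) := by
  have hg_pos : ∀ t F', 0 < Real.exp (-2 * t) * E t F' := fun t F' =>
    mul_pos (Real.exp_pos _) (hE t F')
  refine tendsto_iSup_of_le_iSup_of_tendsto_le
    (fun F' t => ENNReal.ofReal ((i F F') ^ 2) / ENNReal.ofReal (Real.exp (-2 * t) * E t F'))
    (Eventually.of_forall fun t => ?_)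
    (fun F' => ENNReal.Tendsto.const_div (ENNReal.tendsto_ofReal (h3 F'))
      (Or.inr ENNReal.ofReal_ne_top))
    (fun F' => Eventually.of_forall fun t =>
      ENNReal.ofReal_div_ofReal_le_ofReal (hg_pos t F')
        ((exp_two_mul_mul_exp_neg_two_mul t _ _).symm ▸ h1 t F'))
  obtain ⟨H, hH⟩ := h4 t
  calc ENNReal.ofReal (Real.exp (2 * t) * E t F)
      = ENNReal.ofReal ((i F H) ^ 2) / ENNReal.ofReal (Real.exp (-2 * t) * E t H) :=
        ENNReal.ofReal_eq_ofReal_div_ofReal (hg_pos t H)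
          ((exp_two_mul_mul_exp_neg_two_mul t _ _).trans hH)
    _ ≤ ENNReal.ofReal ((i F H) ^ 2) / ENNReal.ofReal (A H) :=
        ENNReal.div_le_div_left (ENNReal.ofReal_le_ofReal (h2 t H)) _
    _ ≤ ⨆ F', ENNReal.ofReal ((i F F') ^ 2) / ENNReal.ofReal (A F') :=
        le_iSup (fun F' => ENNReal.ofReal ((i F F') ^ 2) / ENNReal.ofReal (A F')) H

theorem stmt_5 {M : Type*} [Nonempty M] (i : M → M → ℝ)
    (hi : ∀ F F', 0 ≤ i F F')
    (A : M → ℝ) (hA : ∀ F', 0 ≤ A F')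
    (E : ℝ → M → ℝ) (hE : ∀ t F', 0 < E t F')
    (F : M)
    (h1 : ∀ t F', E t F * E t F' ≥ (i F F') ^ 2)
    (h2 : ∀ t F', Real.exp (-2 * t) * E t F' ≥ A F')
    (h3 : ∀ F', Tendsto (fun t => Real.exp (-2 * t) * E t F') atTop (nhds (A F')))
    (h4 : ∀ t, ∃ H, E t F * E t H = (i F H) ^ 2) :
    Tendsto (fun t => ENNReal.ofReal (Real.exp (2 * t) * E t F)) atTop
      (nhds (⨆ F', ENNReal.ofReal ((i F F') ^ 2) / ENNReal.ofReal (A F'))) :=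
  stmt_5_general i A E hE F h1 h2 h3 h4
end

section
/- Let n ≥ 1 and α : Fin n → ℝ be positive, and set P := max over j of α j, Q := max over j of (α j)⁻¹. Then with s₀ := Real.sqrt (P / Q) one has s₀ > 0 and max over j of (max (α j / s₀) (s₀ / (α j))) = Real.sqrt (P * Q). Consequently the infimum over s > 0 of max_j max{α j / s, s / α j} equals Real.sqrt (P * Q) and is attained. -/
/-! With `P = max α` and `Q = max α⁻¹`, the objective at `s > 0` equals `max (P / s) (s * Q)`.
The product of these two quantities is `P * Q` whatever `s` is, so their maximum is at least
`√(P * Q)`, with equality exactly when they agree, i.e. at `s = √(P / Q)`. -/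

open Real

theorem Finset.sup'_sup {ι α : Type*} [SemilatticeSup α] (s : Finset ι) (H : s.Nonempty)
    (f g : ι → α) : s.sup' H (f ⊔ g) = s.sup' H f ⊔ s.sup' H g :=
  le_antisymm (sup'_le _ _ fun _ hi => sup_le_sup (le_sup' f hi) (le_sup' g hi))
    (sup_le (sup'_mono_fun fun _ _ => le_sup_left) (sup'_mono_fun fun _ _ => le_sup_right))

theorem Finset.sup'_max_div_div {ι : Type*} (s : Finset ι) (H : s.Nonempty) (f : ι → ℝ)
    {t : ℝ} (ht : 0 ≤ t) :
    s.sup' H (fun j => max (f j / t) (t / f j)) =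
      max (s.sup' H f / t) (t * s.sup' H fun j => (f j)⁻¹) := by
  simp only [div_eq_mul_inv t]
  rw [sup'_div₀ ht, mul₀_sup' ht]
  exact s.sup'_sup H (fun j => f j / t) (fun j => t * (f j)⁻¹)

theorem Real.sqrt_mul_le_max_div_mul {P Q t : ℝ} (hP : 0 ≤ P) (hQ : 0 ≤ Q) (ht : 0 < t) :
    √(P * Q) ≤ max (P / t) (t * Q) := by
  have hm : 0 ≤ max (P / t) (t * Q) := le_max_of_le_left (by positivity)
  calc √(P * Q) = √((P / t) * (t * Q)) := by field_simp
    _ ≤ √(max (P / t) (t * Q) * max (P / t) (t * Q)) :=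
        sqrt_le_sqrt (mul_le_mul (le_max_left _ _) (le_max_right _ _) (by positivity) hm)
    _ = max (P / t) (t * Q) := sqrt_mul_self hm

theorem Real.max_div_sqrt_div_mul_eq_sqrt_mul {P Q : ℝ} (hP : 0 ≤ P) (hQ : 0 < Q) :
    max (P / √(P / Q)) (√(P / Q) * Q) = √(P * Q) := by
  obtain ⟨a, ha, rfl⟩ : ∃ a, 0 ≤ a ∧ a * a = P := ⟨√P, sqrt_nonneg P, mul_self_sqrt hP⟩
  obtain ⟨b, hb, rfl⟩ : ∃ b, 0 < b ∧ b * b = Q := ⟨√Q, sqrt_pos.2 hQ, mul_self_sqrt hQ.le⟩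
  rw [mul_mul_mul_comm, sqrt_mul_self (mul_nonneg ha hb.le), mul_div_mul_comm,
    sqrt_mul_self (div_nonneg ha hb.le)]
  rcases ha.eq_or_lt with rfl | ha
  · simp
  field_simp
  simp

theorem stmt_10 (n : ℕ) (hn : 1 ≤ n) (α : Fin n → ℝ) (hα : ∀ j, 0 < α j)
    (P Q : ℝ)
    (hP : P = Finset.univ.sup' ⟨⟨0, hn⟩, Finset.mem_univ _⟩ α)
    (hQ : Q = Finset.univ.sup' ⟨⟨0, hn⟩, Finset.mem_univ _⟩ (fun j => (α j)⁻¹)) :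
    0 < Real.sqrt (P / Q) ∧
    Finset.univ.sup' ⟨⟨0, hn⟩, Finset.mem_univ _⟩
        (fun j => max (α j / Real.sqrt (P / Q)) (Real.sqrt (P / Q) / α j))
      = Real.sqrt (P * Q) ∧
    IsLeast {r : ℝ | ∃ s : ℝ, 0 < s ∧
        r = Finset.univ.sup' ⟨⟨0, hn⟩, Finset.mem_univ _⟩
              (fun j => max (α j / s) (s / α j))}
      (Real.sqrt (P * Q)) := by
  have hP0 : 0 < P := hP ▸ (hα _).trans_le (Finset.le_sup' α (Finset.mem_univ ⟨0, hn⟩))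
  have hQ0 : 0 < Q := hQ ▸ (inv_pos.2 (hα _)).trans_le
    (Finset.le_sup' (fun j => (α j)⁻¹) (Finset.mem_univ ⟨0, hn⟩))
  have hs0 : 0 < √(P / Q) := sqrt_pos.2 (div_pos hP0 hQ0)
  have objective (s : ℝ) (hs : 0 < s) :
      Finset.univ.sup' ⟨⟨0, hn⟩, Finset.mem_univ _⟩ (fun j => max (α j / s) (s / α j)) =
        max (P / s) (s * Q) := by
    rw [hP, hQ]
    exact Finset.sup'_max_div_div _ _ _ hs.le
  have attained := (objective _ hs0).trans (max_div_sqrt_div_mul_eq_sqrt_mul hP0.le hQ0)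
  refine ⟨hs0, attained, ⟨_, hs0, attained.symm⟩, ?_⟩
  rintro _ ⟨s, hs, rfl⟩
  exact (objective s hs).symm ▸ sqrt_mul_le_max_div_mul hP0.le hQ0.le hs
end
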